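/- (Uniqueness for the Burgers equation with mean-zero periodic data.) Let ε ≥ 0 and let V : ℝ × ℝ → ℝ be smooth, bounded and 2π-periodic in the space variable. Let u⁽¹⁾, u⁽²⁾ : [0,∞) × ℝ → ℝ be bounded classical solutions (continuously differentiable in t and twice continuously differentiable in x) of u_t + ½(u²)_x = (ε/2)·u_xx + V_x, each 2π-periodic in x, with the same bounded initial condition u⁽¹⁾(0,·) = u⁽²⁾(0,·) = u₀ satisfying ∫_0^{2π} u₀(x) dx = 0. Then u⁽¹⁾ = u⁽²⁾. -/

import Mathlib

open Real MeasureTheory Set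

private theorem periodic_deriv' {f f' : ℝ → ℝ} (hd : ∀ y, HasDerivAt f (f' y) y)
    (hp : ∀ y, f (y + 2 * π) = f y) : ∀ y, f' (y + 2 * π) = f' y := by
  intro y
  have h1 : HasDerivAt (fun z => f (z + 2 * π)) (f' (y + 2 * π) * 1) y :=
    (hd (y + 2 * π)).comp y ((hasDerivAt_id y).add_const (2 * π))
  have h2 : (fun z => f (z + 2 * π)) = f := funext fun z => hp z
  rw [h2, mul_one] at h1
  exact h1.unique (hd y)

private theorem burgers_aux (ε : ℝ) (hε : 0 ≤ ε) (w wt wx wxx p px : ℝ → ℝ → ℝ)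
    (hdt : ∀ t y, HasDerivAt (fun r => w r y) (wt t y) t)
    (hdx : ∀ t y, HasDerivAt (w t) (wx t y) y)
    (hdxx : ∀ t y, HasDerivAt (wx t) (wxx t y) y)
    (hdpx : ∀ t y, HasDerivAt (p t) (px t y) y)
    (hct : Continuous fun q : ℝ × ℝ => wt q.1 q.2)
    (hcx : Continuous fun q : ℝ × ℝ => wx q.1 q.2)
    (hcxx : Continuous fun q : ℝ × ℝ => wxx q.1 q.2)
    (hcpx : Continuous fun q : ℝ × ℝ => px q.1 q.2)
    (hperw : ∀ t y, w t (y + 2 * π) = w t y)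
    (hperp : ∀ t y, p t (y + 2 * π) = p t y)
    (hpde : ∀ t, 0 ≤ t → ∀ y,
      wt t y = -(px t y * w t y + p t y * wx t y) / 2 + (ε / 2) * wxx t y)
    (hinit : ∀ y, w 0 y = 0) :
    ∀ t, 0 ≤ t → ∀ y, w t y = 0 := by
  -- basic continuity facts
  have hcw : ∀ t, Continuous (w t) := fun t =>
    continuous_iff_continuousAt.2 fun y => (hdx t y).continuousAt
  have hcp : ∀ t, Continuous (p t) := fun t =>
    continuous_iff_continuousAt.2 fun y => (hdpx t y).continuousAt
  have slice : ∀ {g : ℝ → ℝ → ℝ}, (Continuous fun q : ℝ × ℝ => g q.1 q.2) →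
      ∀ t, Continuous (g t) := fun {g} hg t => hg.comp (Continuous.prodMk_right t)
  have hcwx : ∀ t, Continuous (wx t) := slice hcx
  have hcwxx : ∀ t, Continuous (wxx t) := slice hcxx
  have hcpx' : ∀ t, Continuous (px t) := slice hcpx
  have hperwx : ∀ t y, wx t (y + 2 * π) = wx t y := fun t =>
    periodic_deriv' (hdx t) (hperw t)
  have hπ : (0:ℝ) < 2 * π := by positivity
  set μ : Measure ℝ := volume.restrict (Set.Ioc 0 (2 * π)) with hμdef
  have hint : ∀ g : ℝ → ℝ, Continuous g → Integrable g μ := fun g hg =>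
    (hg.integrableOn_Icc (a := 0) (b := 2 * π)).mono_set Set.Ioc_subset_Icc_self
  set E : ℝ → ℝ := fun t => ∫ a, (w t a) ^ 2 ∂μ with hEdef
  -- derivative of E
  have hE : ∀ t, HasDerivAt E (∫ a, 2 * w t a * wt t a ∂μ) t := by
    intro t
    obtain ⟨C₀, hC₀⟩ :=
      (isCompact_Icc.prod isCompact_Icc).exists_bound_of_continuousOn
        (s := Set.Icc (t-1) (t+1) ×ˢ Set.Icc 0 (2*π)) hct.continuousOn
    set C := max C₀ 0 with hCdef
    have hCnn : 0 ≤ C := le_max_right _ _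
    have hC : ∀ x ∈ Metric.ball t 1, ∀ a ∈ Set.Ioc (0:ℝ) (2*π), |wt x a| ≤ C := by
      intro x hx a ha
      have hx' : x ∈ Set.Icc (t-1) (t+1) := by
        rw [Real.ball_eq_Ioo] at hx
        exact ⟨hx.1.le, hx.2.le⟩
      have := hC₀ (x, a) ⟨hx', Set.Ioc_subset_Icc_self ha⟩
      exact le_trans (le_of_eq (Real.norm_eq_abs _).symm) (this.trans (le_max_left _ _))
    have hwb : ∀ x ∈ Metric.ball t 1, ∀ a ∈ Set.Ioc (0:ℝ) (2*π), |w x a| ≤ |w t a| + C := by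
      intro x hx a ha
      have hmvt := Convex.norm_image_sub_le_of_norm_hasDerivWithin_le
        (f := fun r => w r a) (f' := fun r => wt r a) (s := Metric.ball t 1)
        (fun r hr => (hdt r a).hasDerivWithinAt)
        (fun r hr => le_trans (le_of_eq (Real.norm_eq_abs _)) (hC r hr a ha))
        (convex_ball t 1) (Metric.mem_ball_self one_pos) hx
      have hxt : ‖x - t‖ ≤ 1 := by
        rw [Real.norm_eq_abs, ← Real.dist_eq]
        exact (Metric.mem_ball.1 hx).le
      have : |w x a - w t a| ≤ C := by
        calc |w x a - w t a| ≤ C * ‖x - t‖ := hmvt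
        _ ≤ C * 1 := by nlinarith
        _ = C := mul_one C
      calc |w x a| = |w t a + (w x a - w t a)| := by ring_nf
      _ ≤ |w t a| + |w x a - w t a| := abs_add_le _ _
      _ ≤ |w t a| + C := by linarith
    have key := hasDerivAt_integral_of_dominated_loc_of_deriv_le
      (μ := μ) (x₀ := t) (F := fun x a => (w x a) ^ 2)
      (F' := fun x a => 2 * w x a * wt x a)
      (bound := fun a => 2 * (|w t a| + C) * C) (Metric.ball_mem_nhds t one_pos)
      (Filter.Eventually.of_forall fun x => ((hcw x).pow 2).aestronglyMeasurable)
      (hint _ ((hcw t).pow 2))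
      (((continuous_const.mul (hcw t)).mul (slice hct t)).aestronglyMeasurable)
      ?_ (hint _ (((continuous_const.mul ((hcw t).abs.add continuous_const))).mul continuous_const)) ?_
    · exact key.2
    · rw [hμdef]
      rw [MeasureTheory.ae_restrict_iff' measurableSet_Ioc]
      refine Filter.Eventually.of_forall fun a ha x hx => ?_
      have h1 := hwb x hx a ha
      have h2 := hC x hx a ha
      have habs : 0 ≤ |w t a| := abs_nonneg _
      calc ‖2 * w x a * wt x a‖ = 2 * |w x a| * |wt x a| := by
            rw [Real.norm_eq_abs, abs_mul, abs_mul, abs_two]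
      _ ≤ 2 * (|w t a| + C) * C := by nlinarith [abs_nonneg (w x a), abs_nonneg (wt x a)]
    · refine Filter.Eventually.of_forall fun a x hx => ?_
      have h := (hdt x a).fun_pow 2
      refine h.congr_deriv ?_
      push_cast
      ring
  have hEcont : Continuous E :=
    Differentiable.continuous fun t => (hE t).differentiableAt
  have hEnn : ∀ t, 0 ≤ E t :=
    fun t => integral_nonneg fun a => sq_nonneg _
  have hE0 : E 0 = 0 := by
    rw [hEdef]
    simp only [hinit]
    simp
  -- now fix the final time s
  intro s hs
  -- bound on px over the compact box
  obtain ⟨K₀, hK₀⟩ :=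
    (isCompact_Icc.prod isCompact_Icc).exists_bound_of_continuousOn
      (s := Set.Icc (0:ℝ) s ×ˢ Set.Icc 0 (2*π)) hcpx.continuousOn
  set K := max K₀ 0 with hKdef
  have hK : ∀ t ∈ Set.Icc (0:ℝ) s, ∀ a ∈ Set.Ioc (0:ℝ) (2*π), |px t a| ≤ K := by
    intro t ht a ha
    have := hK₀ (t, a) ⟨ht, Set.Ioc_subset_Icc_self ha⟩
    exact le_trans (le_of_eq (Real.norm_eq_abs _).symm) (this.trans (le_max_left _ _))
  -- derivative bound for E on [0, s]
  have hE'le : ∀ t ∈ Set.Icc (0:ℝ) s, (∫ a, 2 * w t a * wt t a ∂μ) ≤ (K/2) * E t := by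
    intro t ht
    have hGd : ∀ z, HasDerivAt
        (fun z => (-(1:ℝ)/2) * (p t z * (w t z)^2) + ε * (w t z * wx t z))
        ((-(1:ℝ)/2) * (px t z * (w t z)^2 + p t z * (2 * w t z * wx t z))
          + ε * (wx t z * wx t z + w t z * wxx t z)) z := by
      intro z
      have hw2 : HasDerivAt (fun z => (w t z)^2) (2 * w t z * wx t z) z := by
        have := (hdx t z).fun_pow 2
        refine this.congr_deriv ?_
        push_cast
        ring
      exact (((hdpx t z).mul hw2).const_mul ((-1:ℝ)/2)).add
        (((hdx t z).mul (hdxx t z)).const_mul ε)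
    have hGdcont : Continuous fun z => (-(1:ℝ)/2) * (px t z * (w t z)^2 + p t z * (2 * w t z * wx t z))
        + ε * (wx t z * wx t z + w t z * wxx t z) := by
      have := hcw t; have := hcp t; have := hcwx t; have := hcwxx t; have := hcpx' t
      fun_prop
    have hGdint : (∫ a, ((-(1:ℝ)/2) * (px t a * (w t a)^2 + p t a * (2 * w t a * wx t a))
        + ε * (wx t a * wx t a + w t a * wxx t a)) ∂μ) = 0 := by
      have h1 : (∫ z in (0:ℝ)..(2*π), ((-(1:ℝ)/2) * (px t z * (w t z)^2 + p t z * (2 * w t z * wx t z))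
          + ε * (wx t z * wx t z + w t z * wxx t z)))
          = ((-(1:ℝ)/2) * (p t (2*π) * (w t (2*π))^2) + ε * (w t (2*π) * wx t (2*π)))
            - ((-(1:ℝ)/2) * (p t 0 * (w t 0)^2) + ε * (w t 0 * wx t 0)) :=
        intervalIntegral.integral_eq_sub_of_hasDerivAt (fun z _ => hGd z)
          (hGdcont.intervalIntegrable 0 (2*π))
      have h2 : (∫ z in (0:ℝ)..(2*π), ((-(1:ℝ)/2) * (px t z * (w t z)^2 + p t z * (2 * w t z * wx t z))
          + ε * (wx t z * wx t z + w t z * wxx t z)))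
          = ∫ a, ((-(1:ℝ)/2) * (px t a * (w t a)^2 + p t a * (2 * w t a * wx t a))
          + ε * (wx t a * wx t a + w t a * wxx t a)) ∂μ :=
        intervalIntegral.integral_of_le hπ.le
      rw [h2] at h1
      rw [h1]
      have e2 : w t (2*π) = w t 0 := by have := hperw t 0; rwa [zero_add] at this
      have e3 : p t (2*π) = p t 0 := by have := hperp t 0; rwa [zero_add] at this
      have e4 : wx t (2*π) = wx t 0 := by have := hperwx t 0; rwa [zero_add] at this
      rw [e2, e3, e4]
      ring
    -- pointwise identity and estimate
    have hsplit : (∫ a, 2 * w t a * wt t a ∂μ)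
        = (∫ a, ((-(1:ℝ)/2) * (px t a * (w t a)^2 + p t a * (2 * w t a * wx t a))
            + ε * (wx t a * wx t a + w t a * wxx t a)) ∂μ)
          + ∫ a, (-(px t a * (w t a)^2)/2 - ε * (wx t a)^2) ∂μ := by
      rw [← integral_add (hint _ hGdcont)]
      · apply integral_congr_ae
        refine Filter.Eventually.of_forall fun a => ?_
        show 2 * w t a * wt t a = _
        rw [hpde t ht.1 a]
        ring
      · have := hcw t; have := hcwx t; have := hcpx' t
        apply hint
        fun_prop
    have hR : (∫ a, (-(px t a * (w t a)^2)/2 - ε * (wx t a)^2) ∂μ)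
        ≤ ∫ a, (K/2) * (w t a)^2 ∂μ := by
      rw [hμdef]
      apply setIntegral_mono_on
      · have := hcw t; have := hcwx t; have := hcpx' t
        exact hint _ (by fun_prop)
      · have := hcw t
        exact hint _ (by fun_prop)
      · exact measurableSet_Ioc
      · intro a ha
        have hpxb := hK t ht a ha
        have h1 := (abs_le.mp hpxb).1
        nlinarith [sq_nonneg (w t a), sq_nonneg (wx t a)]
    rw [hsplit, hGdint, zero_add]
    calc (∫ a, (-(px t a * (w t a)^2)/2 - ε * (wx t a)^2) ∂μ)
        ≤ ∫ a, (K/2) * (w t a)^2 ∂μ := hR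
    _ = (K/2) * E t := by rw [integral_const_mul]
  -- Gronwall via antitone auxiliary function
  set F : ℝ → ℝ := fun t => E t * Real.exp (-(K/2) * t) with hFdef
  have hF : ∀ t, HasDerivAt F
      ((∫ a, 2 * w t a * wt t a ∂μ) * Real.exp (-(K/2) * t)
        + E t * (Real.exp (-(K/2) * t) * -(K/2))) t := by
    intro t
    have hexp : HasDerivAt (fun r => Real.exp (-(K/2) * r)) (Real.exp (-(K/2) * t) * -(K/2)) t := by
      have := (((hasDerivAt_id t).const_mul (-(K/2)))).exp
      simpa using this
    exact (hE t).mul hexp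
  have hanti : AntitoneOn F (Set.Icc 0 s) := by
    apply antitoneOn_of_deriv_nonpos (convex_Icc 0 s)
    · exact (hEcont.mul (Real.continuous_exp.comp (by fun_prop))).continuousOn
    · intro x _
      exact (hF x).differentiableAt.differentiableWithinAt
    · intro x hx
      rw [interior_Icc] at hx
      rw [(hF x).deriv]
      have hle := hE'le x ⟨hx.1.le, hx.2.le⟩
      have hepos := Real.exp_pos (-(K/2) * x)
      nlinarith [mul_le_mul_of_nonneg_right hle hepos.le]
  have hFs : F s ≤ F 0 := hanti ⟨le_rfl, hs⟩ ⟨hs, le_rfl⟩ hs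
  have hF0 : F 0 = 0 := by
    rw [hFdef]; simp [hE0]
  have hEs : E s = 0 := by
    have h1 : 0 ≤ F s := mul_nonneg (hEnn s) (Real.exp_pos _).le
    have h2 : E s * Real.exp (-(K/2) * s) = 0 := le_antisymm (by rw [← hF0]; exact hFs) h1
    rcases mul_eq_zero.mp h2 with h | h
    · exact h
    · exact absurd h (Real.exp_pos _).ne'
  -- pointwise conclusion
  intro y
  have hfper : Function.Periodic (fun z => (w s z)^2) (2*π) := fun z => by show (w s (z + 2*π))^2 = (w s z)^2; rw [hperw]
  obtain ⟨y₀, hy₀, hval⟩ := hfper.exists_mem_Ico₀ hπ y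
  have hy₀0 : (w s y₀)^2 = 0 := by
    by_contra hne
    have hpos : 0 < (w s y₀)^2 := (sq_nonneg _).lt_of_ne (Ne.symm hne)
    have hEs' : (∫ z in (0:ℝ)..(2*π), (w s z)^2) = 0 := by
      rw [intervalIntegral.integral_of_le hπ.le]
      exact hEs
    have hcont : Continuous fun z => (w s z)^2 := (hcw s).pow 2
    have hopen : IsOpen {x | (w s y₀)^2 / 2 < (w s x)^2} :=
      isOpen_lt continuous_const hcont
    obtain ⟨δ, hδpos, hδ⟩ := Metric.isOpen_iff.mp hopen y₀ (by simpa using half_lt_self hpos)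
    set d := min (y₀ + δ/2) (2*π) with hddef
    have hy₀d : y₀ < d := lt_min (by linarith) hy₀.2
    have hd2π : d ≤ 2*π := min_le_right _ _
    have hsub : ∀ x ∈ Set.Icc y₀ d, (w s y₀)^2/2 ≤ (w s x)^2 := by
      intro x hx
      refine le_of_lt (hδ ?_)
      rw [Metric.mem_ball, Real.dist_eq, abs_of_nonneg (by linarith [hx.1])]
      have : x ≤ y₀ + δ/2 := hx.2.trans (min_le_left _ _)
      linarith
    have hii : ∀ a b : ℝ, IntervalIntegrable (fun z => (w s z)^2) volume a b :=
      fun a b => hcont.intervalIntegrable a b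
    have split1 := intervalIntegral.integral_add_adjacent_intervals (hii 0 y₀) (hii y₀ (2*π))
    have split2 := intervalIntegral.integral_add_adjacent_intervals (hii y₀ d) (hii d (2*π))
    have h1 : 0 ≤ ∫ z in (0:ℝ)..y₀, (w s z)^2 :=
      intervalIntegral.integral_nonneg hy₀.1 fun u _ => sq_nonneg _
    have h3 : 0 ≤ ∫ z in d..(2*π), (w s z)^2 :=
      intervalIntegral.integral_nonneg hd2π fun u _ => sq_nonneg _
    have h2 : (d - y₀) * (w s y₀)^2 / 2 ≤ ∫ z in y₀..d, (w s z)^2 := by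
      have := intervalIntegral.integral_mono_on hy₀d.le
        (intervalIntegrable_const) (hii y₀ d) hsub
      simpa [intervalIntegral.integral_const, smul_eq_mul] using this
    have hprod : 0 < (d - y₀) * (w s y₀)^2 / 2 :=
      div_pos (mul_pos (sub_pos.2 hy₀d) hpos) two_pos
    linarith
  have : (w s y)^2 = 0 := by rw [hval]; exact hy₀0
  exact pow_eq_zero_iff (by norm_num) |>.mp this

/-- `u` is a bounded classical solution (C¹ in time, C² in space, with jointly continuous
derivatives) of the forced Burgers equation `u_t + ½(u²)_x = (ε/2)u_xx + V_x` for `t ≥ 0`,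
`2π`-periodic in the space variable. -/
def IsClassicalBurgersSolution (ε : ℝ) (V : ℝ → ℝ → ℝ) (u : ℝ → ℝ → ℝ) : Prop :=
  ∃ ut ux uxx : ℝ → ℝ → ℝ,
    (∀ s y, HasDerivAt (fun r => u r y) (ut s y) s) ∧
    (∀ s y, HasDerivAt (u s) (ux s y) y) ∧
    (∀ s y, HasDerivAt (ux s) (uxx s y) y) ∧
    Continuous (fun p : ℝ × ℝ => ut p.1 p.2) ∧
    Continuous (fun p : ℝ × ℝ => ux p.1 p.2) ∧
    Continuous (fun p : ℝ × ℝ => uxx p.1 p.2) ∧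
    (∃ M, ∀ s y, 0 ≤ s → |u s y| ≤ M) ∧
    (∀ s y, u s (y + 2 * π) = u s y) ∧
    (∀ s, 0 ≤ s → ∀ y,
      ut s y + (1 / 2) * deriv (fun z => (u s z) ^ 2) y = (ε / 2) * uxx s y + deriv (V s) y)

/-- **Uniqueness for the forced Burgers equation with mean-zero periodic data.**
For `ε ≥ 0` and smooth bounded `V`, `2π`-periodic in space, two bounded classical
`2π`-space-periodic solutions with the same bounded mean-zero initial condition coincide. -/
theorem burgers_uniqueness (ε : ℝ) (hε : 0 ≤ ε)
    (V : ℝ → ℝ → ℝ) (hV : ContDiff ℝ (⊤ : ℕ∞) fun p : ℝ × ℝ => V p.1 p.2)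
    (hVbdd : ∃ C, ∀ s y, |V s y| ≤ C)
    (hVperiodic : ∀ s y, V s (y + 2 * π) = V s y)
    (u₁ u₂ : ℝ → ℝ → ℝ)
    (h₁ : IsClassicalBurgersSolution ε V u₁)
    (h₂ : IsClassicalBurgersSolution ε V u₂)
    (u₀ : ℝ → ℝ) (hu₀bdd : ∃ C, ∀ y, |u₀ y| ≤ C)
    (hu₀mean : (∫ y in (0:ℝ)..(2 * π), u₀ y) = 0)
    (hinit₁ : ∀ y, u₁ 0 y = u₀ y) (hinit₂ : ∀ y, u₂ 0 y = u₀ y) :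
    ∀ s, 0 ≤ s → ∀ y, u₁ s y = u₂ s y := by
  obtain ⟨ut₁, ux₁, uxx₁, hut₁, hux₁, huxx₁, hct₁, hcx₁, hcxx₁, -, hper₁, heq₁⟩ := h₁
  obtain ⟨ut₂, ux₂, uxx₂, hut₂, hux₂, huxx₂, hct₂, hcx₂, hcxx₂, -, hper₂, heq₂⟩ := h₂
  have key := burgers_aux ε hε
    (fun t y => u₁ t y - u₂ t y) (fun t y => ut₁ t y - ut₂ t y)
    (fun t y => ux₁ t y - ux₂ t y) (fun t y => uxx₁ t y - uxx₂ t y)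
    (fun t y => u₁ t y + u₂ t y) (fun t y => ux₁ t y + ux₂ t y)
    (fun t y => (hut₁ t y).sub (hut₂ t y))
    (fun t y => (hux₁ t y).sub (hux₂ t y))
    (fun t y => (huxx₁ t y).sub (huxx₂ t y))
    (fun t y => (hux₁ t y).add (hux₂ t y))
    (hct₁.sub hct₂) (hcx₁.sub hcx₂) (hcxx₁.sub hcxx₂) (hcx₁.add hcx₂)
    (fun t y => by simp only [hper₁, hper₂])
    (fun t y => by simp only [hper₁, hper₂])
    ?_ (fun y => by show u₁ 0 y - u₂ 0 y = 0; rw [hinit₁, hinit₂, sub_self])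
  · intro s hs y
    have := key s hs y
    simpa [sub_eq_zero] using this
  · intro t ht y
    have d₁ : deriv (fun z => (u₁ t z) ^ 2) y = 2 * u₁ t y * ux₁ t y := by
      have h := ((hux₁ t y).fun_pow 2).deriv
      rw [h]; push_cast; ring
    have d₂ : deriv (fun z => (u₂ t z) ^ 2) y = 2 * u₂ t y * ux₂ t y := by
      have h := ((hux₂ t y).fun_pow 2).deriv
      rw [h]; push_cast; ring
    have e₁ := heq₁ t ht y
    have e₂ := heq₂ t ht y
    rw [d₁] at e₁
    rw [d₂] at e₂
    show ut₁ t y - ut₂ t y = _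
    linear_combination e₁ - e₂
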